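/- Let $n\ge 1$, $l\ge 1$, and $r\ge 2l$ with $r^2\le l^3 n$. Let $\mathcal{B}$ be an $n$-uniform intersecting family of size $r$ in which every $l$ distinct sets have empty intersection. Then for every integer $k\le r/(20 l^3)$, we have $c_{n-k}(\mathcal{B})\le 1$. -/

import Mathlib

open Finset

variable {α : Type*}

/-- `C` is a cover of the family `𝓕`: it intersects every member. -/
def IsCover [DecidableEq α] (C : Finset α) (𝓕 : Finset (Finset α)) : Prop :=
  ∀ A ∈ 𝓕, (C ∩ A).Nonempty

/-- The family of all minimal covers of `𝓕` of size at most `n`. -/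
noncomputable def minCovers [Fintype α] [DecidableEq α] (n : ℕ)
    (𝓕 : Finset (Finset α)) : Finset (Finset α) := by
  classical
  exact univ.filter (fun C => C.card ≤ n ∧ IsCover C 𝓕 ∧
    ∀ C' ⊆ C, IsCover C' 𝓕 → C' = C)

/-- `c_λ(𝓕) = ∑_{C ∈ 𝓒(𝓕)} λ^{-|C|}`. -/
noncomputable def covWeight [Fintype α] [DecidableEq α] (n : ℕ) (lam : ℝ)
    (𝓕 : Finset (Finset α)) : ℝ :=
  ∑ C ∈ minCovers n 𝓕, lam ^ (-(C.card : ℤ))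

/-- The covering number `τ(𝓕)`: minimum size of a cover. -/
noncomputable def covNum [DecidableEq α] (𝓕 : Finset (Finset α)) : ℕ :=
  sInf {k | ∃ C : Finset α, C.card = k ∧ IsCover C 𝓕}

/-!
List a minimal cover `C` greedily: while some set of `𝓑` is not met, choose such a set and pick a
point of `C` in it. This embeds the minimal covers into a tree in which every node has `n`
children, so `c_n(𝓑) ≤ 1`. Picking once the least and once the largest point gives two such
embeddings, and they cannot reach a common cover along a branch that picks a point of an earlier
branch set. At depth `d` the `d` earlier branch sets meet the next set in at least `d / (l - 2)`
points, as every point lies in fewer than `l` sets; so only a fraction `1 - d / ((l - 2) n)` of the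
children of a fresh node are fresh. As every cover has at least `D = ⌊r / (l - 1)⌋` points, this
gives `2 c_n ≤ 1 + ∏_{d < D} (1 - d / ((l - 2) n)) ≤ 1 + exp (-Ω(r² / (l³ n)))`.
Finally `c_{n-k} ≤ (n / (n - k))^r c_n` because minimal covers have at most `r` points, and
Bernoulli's inequality absorbs this factor when `k ≤ r / (20 l³)`.
-/

open Real

section

variable [DecidableEq α]

lemma mem_minCovers [Fintype α] {m : ℕ} {𝓕 : Finset (Finset α)} {C : Finset α} :
    C ∈ minCovers m 𝓕 ↔ #C ≤ m ∧ IsCover C 𝓕 ∧ ∀ C' ⊆ C, IsCover C' 𝓕 → C' = C := by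
  simp [minCovers]

lemma card_le_of_mem_minCovers [Fintype α] {m : ℕ} {𝓕 : Finset (Finset α)} {C : Finset α}
    (hC : C ∈ minCovers m 𝓕) : #C ≤ #𝓕 := by
  obtain ⟨-, hcov, hmin⟩ := mem_minCovers.1 hC
  have hprivate : ∀ x ∈ C, ∃ A ∈ 𝓕, C ∩ A = {x} := by
    intro x hx
    have : ¬IsCover (C.erase x) 𝓕 := fun h =>
      (erase_ssubset hx).ne (hmin _ (erase_subset x C) h)
    obtain ⟨A, hA, hempty⟩ : ∃ A ∈ 𝓕, ¬((C.erase x) ∩ A).Nonempty := by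
      simpa only [IsCover, not_forall, exists_prop] using this
    refine ⟨A, hA, (subset_singleton_iff.1 fun y hy => ?_).resolve_left (hcov A hA).ne_empty⟩
    by_contra hyx
    rw [mem_singleton] at hyx
    obtain ⟨hyC, hyA⟩ := mem_inter.1 hy
    exact hempty ⟨y, mem_inter.2 ⟨mem_erase.2 ⟨hyx, hyC⟩, hyA⟩⟩
  choose! f hf𝓕 hfC using hprivate
  refine card_le_card_of_injOn f hf𝓕 fun x hx y hy hxy => ?_
  simpa [hfC x hx, hfC y hy] using congrArg (C ∩ ·) hxy

lemma covWeight_le_pow_mul [Fintype α] {m : ℕ} {μ ν : ℝ} (hμ : 0 < μ) (hμν : μ ≤ ν)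
    (𝓕 : Finset (Finset α)) : covWeight m μ 𝓕 ≤ (ν / μ) ^ #𝓕 * covWeight m ν 𝓕 := by
  rw [covWeight, covWeight, mul_sum]
  refine sum_le_sum fun C hC => ?_
  have hν : 0 < ν := hμ.trans_le hμν
  calc μ ^ (-(#C : ℤ)) = (ν / μ) ^ #C * ν ^ (-(#C : ℤ)) := by
        simp only [zpow_neg, zpow_natCast, div_pow]; field_simp
    _ ≤ (ν / μ) ^ #𝓕 * ν ^ (-(#C : ℤ)) := by
        gcongr
        · exact (one_le_div hμ).2 hμν
        · exact card_le_of_mem_minCovers hC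

lemma card_le_card_mul_of_isCover {𝓕 : Finset (Finset α)} {X : Finset α} {d : ℕ}
    (hX : IsCover X 𝓕) (hdeg : ∀ x ∈ X, #{A ∈ 𝓕 | x ∈ A} ≤ d) : #𝓕 ≤ #X * d := by
  simpa using card_mul_le_card_mul (fun A x => x ∈ A) (m := 1)
    (fun A hA => by simpa [bipartiteAbove, one_le_card, filter_mem_eq_inter] using hX A hA)
    (fun x hx => by simpa [bipartiteBelow] using hdeg x hx)

lemma card_div_le_card_of_isCover {𝓑 : Finset (Finset α)} {l : ℕ}
    (hdeg : ∀ x, #{B ∈ 𝓑 | x ∈ B} < l) {X : Finset α} (hX : IsCover X 𝓑) :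
    #𝓑 / (l - 1) ≤ #X :=
  Nat.div_le_of_le_mul <| (mul_comm (l - 1) #X) ▸
    card_le_card_mul_of_isCover hX fun x _ => Nat.le_sub_one_of_lt (hdeg x)

lemma card_filter_mem_lt {𝓑 : Finset (Finset α)} {l : ℕ}
    (hdeg : ∀ 𝓢 ⊆ 𝓑, #𝓢 = l → ∀ x : α, ¬∀ B ∈ 𝓢, x ∈ B) (x : α) : #{B ∈ 𝓑 | x ∈ B} < l := by
  by_contra! hge
  obtain ⟨𝓢, h𝓢, hcard⟩ := exists_subset_card_eq hge
  exact hdeg 𝓢 (h𝓢.trans (filter_subset _ _)) hcard x fun B hB => (mem_filter.1 (h𝓢 hB)).2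

lemma two_lt_of_intersecting {𝓑 : Finset (Finset α)} {l : ℕ}
    (hint : ∀ B1 ∈ 𝓑, ∀ B2 ∈ 𝓑, (B1 ∩ B2).Nonempty) (hdeg : ∀ x, #{B ∈ 𝓑 | x ∈ B} < l)
    (h𝓑 : 1 < #𝓑) : 2 < l := by
  obtain ⟨A, hA, B, hB, hAB⟩ := one_lt_card.1 h𝓑
  obtain ⟨x, hx⟩ := hint A hA B hB
  have hsub : {A, B} ⊆ {C ∈ 𝓑 | x ∈ C} := by
    simp only [insert_subset_iff, singleton_subset_iff, mem_filter]
    exact ⟨⟨hA, (mem_inter.1 hx).1⟩, hB, (mem_inter.1 hx).2⟩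
  calc 2 = #{A, B} := (card_pair hAB).symm
    _ ≤ #{C ∈ 𝓑 | x ∈ C} := card_le_card hsub
    _ < l := hdeg x

end

lemma exists_pick_pair (α : Type*) :
    ∃ pk₁ pk₂ : (S : Finset α) → S.Nonempty → α, (∀ S h, pk₁ S h ∈ S) ∧ (∀ S h, pk₂ S h ∈ S) ∧
      ∀ S h, pk₁ S h = pk₂ S h → #S ≤ 1 := by
  let _ : LinearOrder α := IsWellOrder.linearOrder WellOrderingRel
  exact ⟨fun S h => S.min' h, fun S h => S.max' h, min'_mem, max'_mem,
    fun S h he => not_lt.1 fun h2 => (min'_lt_max'_of_card S h2).ne he⟩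

namespace CoverTree

open scoped Classical

variable [DecidableEq α] (𝓑 : Finset (Finset α))

def uncovered (X : Finset α) : Finset (Finset α) := {B ∈ 𝓑 | Disjoint B X}

noncomputable def nextSet (X : Finset α) : Finset α :=
  if h : (uncovered 𝓑 X).Nonempty then h.choose else ∅

/- Paths of the tree are lists with the newest point first. -/

def IsPath : List α → Prop
  | [] => True
  | x :: xs => IsPath xs ∧ x ∈ nextSet 𝓑 xs.toFinset

noncomputable def branchSets : List α → Finset (Finset α)
  | [] => ∅
  | _ :: xs => insert (nextSet 𝓑 xs.toFinset) (branchSets xs)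

def IsFresh : List α → Prop
  | [] => True
  | x :: xs => IsFresh xs ∧ x ∉ (branchSets 𝓑 xs).biUnion id

/-- `xs` is an initial segment of the greedy listing of `C` that picks its points with `pk`. -/
def Follows (pk : (S : Finset α) → S.Nonempty → α) (C : Finset α) : List α → Prop
  | [] => True
  | x :: xs => Follows pk C xs ∧ ∃ h, x = pk (C ∩ nextSet 𝓑 xs.toFinset) h

noncomputable def pathWeight [Fintype α] (m n : ℕ) (pk : (S : Finset α) → S.Nonempty → α)
    (xs : List α) : ℝ :=
  ∑ C ∈ minCovers m 𝓑 with Follows 𝓑 pk C xs, (n : ℝ)⁻¹ ^ #C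

variable {𝓑}

lemma mem_uncovered {X B : Finset α} : B ∈ uncovered 𝓑 X ↔ B ∈ 𝓑 ∧ Disjoint B X := mem_filter

lemma uncovered_eq_empty_iff {X : Finset α} : uncovered 𝓑 X = ∅ ↔ IsCover X 𝓑 := by
  simp [uncovered, filter_eq_empty_iff, IsCover, not_disjoint_iff_nonempty_inter, inter_comm]

lemma nextSet_mem_uncovered {X : Finset α} (h : (uncovered 𝓑 X).Nonempty) :
    nextSet 𝓑 X ∈ uncovered 𝓑 X := by
  rw [nextSet, dif_pos h]
  exact h.choose_spec

lemma uncovered_nonempty_of_mem_nextSet {X : Finset α} {x : α} (hx : x ∈ nextSet 𝓑 X) :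
    (uncovered 𝓑 X).Nonempty := by
  by_contra h
  simp [nextSet, h] at hx

lemma disjoint_nextSet_of_mem {X : Finset α} {x : α} (hx : x ∈ nextSet 𝓑 X) :
    Disjoint (nextSet 𝓑 X) X :=
  (mem_uncovered.1 (nextSet_mem_uncovered (uncovered_nonempty_of_mem_nextSet hx))).2

lemma card_uncovered_cons_lt {xs : List α} {x : α} (hx : x ∈ nextSet 𝓑 xs.toFinset) :
    #(uncovered 𝓑 (x :: xs).toFinset) < #(uncovered 𝓑 xs.toFinset) := by
  have hne := uncovered_nonempty_of_mem_nextSet hx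
  rw [List.toFinset_cons]
  refine card_lt_card ((ssubset_iff_of_subset fun B hB => ?_).2
    ⟨_, nextSet_mem_uncovered hne, fun h => ?_⟩)
  · obtain ⟨hB𝓑, hdisj⟩ := mem_uncovered.1 hB
    exact mem_uncovered.2 ⟨hB𝓑, hdisj.mono_right (subset_insert x _)⟩
  · exact disjoint_left.1 (mem_uncovered.1 h).2 hx (mem_insert_self x _)

namespace IsPath

lemma nodup : ∀ {xs : List α}, IsPath 𝓑 xs → xs.Nodup
  | [], _ => List.nodup_nil
  | _ :: _, ⟨hxs, hx⟩ => List.nodup_cons.2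
      ⟨fun hmem => disjoint_left.1 (disjoint_nextSet_of_mem hx) hx (List.mem_toFinset.2 hmem),
        hxs.nodup⟩

lemma branchSets_subset : ∀ {xs : List α}, IsPath 𝓑 xs → branchSets 𝓑 xs ⊆ 𝓑
  | [], _ => empty_subset _
  | _ :: _, ⟨hxs, hx⟩ => insert_subset
      (mem_uncovered.1 (nextSet_mem_uncovered (uncovered_nonempty_of_mem_nextSet hx))).1
      hxs.branchSets_subset

lemma exists_mem_of_mem_branchSets :
    ∀ {xs : List α}, IsPath 𝓑 xs → ∀ B ∈ branchSets 𝓑 xs, ∃ w ∈ xs, w ∈ B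
  | [], _, B, hB => absurd hB (notMem_empty B)
  | x :: _, ⟨hxs, hx⟩, B, hB => by
      rcases mem_insert.1 hB with rfl | hB
      · exact ⟨x, List.mem_cons_self, hx⟩
      · obtain ⟨w, hw, hwB⟩ := hxs.exists_mem_of_mem_branchSets B hB
        exact ⟨w, List.mem_cons_of_mem x hw, hwB⟩

lemma nextSet_notMem_branchSets {xs : List α} (hxs : IsPath 𝓑 xs) :
    nextSet 𝓑 xs.toFinset ∉ branchSets 𝓑 xs := fun hmem => by
  obtain ⟨w, hw, hwB⟩ := hxs.exists_mem_of_mem_branchSets _ hmem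
  exact disjoint_left.1 (disjoint_nextSet_of_mem hwB) hwB (List.mem_toFinset.2 hw)

lemma card_branchSets : ∀ {xs : List α}, IsPath 𝓑 xs → #(branchSets 𝓑 xs) = xs.length
  | [], _ => rfl
  | _ :: _, ⟨hxs, _⟩ => by
      rw [branchSets, card_insert_of_notMem hxs.nextSet_notMem_branchSets, hxs.card_branchSets,
        List.length_cons]

/-- Each earlier branch set meets the next set in a point that lies in at most `l - 2` further
sets of `𝓑`. -/
lemma length_le_card_inter_mul {l : ℕ} (hint : ∀ B1 ∈ 𝓑, ∀ B2 ∈ 𝓑, (B1 ∩ B2).Nonempty)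
    (hdeg : ∀ x, #{B ∈ 𝓑 | x ∈ B} < l) {xs : List α} (hxs : IsPath 𝓑 xs)
    (hne : (uncovered 𝓑 xs.toFinset).Nonempty) :
    xs.length ≤ #(nextSet 𝓑 xs.toFinset ∩ (branchSets 𝓑 xs).biUnion id) * (l - 2) := by
  set A := nextSet 𝓑 xs.toFinset
  have hA : A ∈ 𝓑 := (mem_uncovered.1 (nextSet_mem_uncovered hne)).1
  rw [← hxs.card_branchSets]
  refine card_le_card_mul_of_isCover (fun B hB => ?_) (fun y hy => ?_)
  · obtain ⟨y, hy⟩ := hint A hA B (hxs.branchSets_subset hB)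
    obtain ⟨hyA, hyB⟩ := mem_inter.1 hy
    exact ⟨y, mem_inter.2 ⟨mem_inter.2 ⟨hyA, mem_biUnion.2 ⟨B, hB, hyB⟩⟩, hyB⟩⟩
  · have hyA : y ∈ A := (mem_inter.1 hy).1
    have hsub : {B ∈ branchSets 𝓑 xs | y ∈ B} ⊆ {B ∈ 𝓑 | y ∈ B}.erase A := fun B hB => by
      obtain ⟨hB, hyB⟩ := mem_filter.1 hB
      exact mem_erase.2 ⟨fun h => hxs.nextSet_notMem_branchSets (by rwa [h] at hB),
        mem_filter.2 ⟨hxs.branchSets_subset hB, hyB⟩⟩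
    calc #{B ∈ branchSets 𝓑 xs | y ∈ B} ≤ #({B ∈ 𝓑 | y ∈ B}.erase A) := card_le_card hsub
      _ = #{B ∈ 𝓑 | y ∈ B} - 1 := card_erase_of_mem (mem_filter.2 ⟨hA, hyA⟩)
      _ ≤ l - 2 := by have := hdeg y; omega

end IsPath

namespace Follows

variable {pk pk₁ pk₂ : (S : Finset α) → S.Nonempty → α} {C : Finset α}

lemma subset (hpk : ∀ S h, pk S h ∈ S) :
    ∀ {xs : List α}, Follows 𝓑 pk C xs → xs.toFinset ⊆ C
  | [], _ => by simp
  | _ :: _, ⟨hxs, h, rfl⟩ => by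
      rw [List.toFinset_cons]
      exact insert_subset (mem_inter.1 (hpk _ h)).1 (hxs.subset hpk)

lemma isPath (hpk : ∀ S h, pk S h ∈ S) : ∀ {xs : List α}, Follows 𝓑 pk C xs → IsPath 𝓑 xs
  | [], _ => trivial
  | _ :: _, ⟨hxs, h, rfl⟩ => ⟨hxs.isPath hpk, (mem_inter.1 (hpk _ h)).2⟩

lemma card_inter_le_one (hsep : ∀ S h, pk₁ S h = pk₂ S h → #S ≤ 1) :
    ∀ {xs : List α}, Follows 𝓑 pk₁ C xs → Follows 𝓑 pk₂ C xs →
      ∀ B ∈ branchSets 𝓑 xs, #(C ∩ B) ≤ 1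
  | [], _, _, B, hB => absurd hB (notMem_empty B)
  | _ :: _, ⟨h₁, _, rfl⟩, ⟨h₂, _, he⟩, B, hB => by
      rcases mem_insert.1 hB with rfl | hB
      · exact hsep _ _ he
      · exact card_inter_le_one hsep h₁ h₂ B hB

/-- A cover reached along the same path by two pickers that only agree on singletons never
picks a point of an earlier branch set: that set would then contain two points of the cover. -/
lemma isFresh (hpk₁ : ∀ S h, pk₁ S h ∈ S) (hsep : ∀ S h, pk₁ S h = pk₂ S h → #S ≤ 1) :
    ∀ {xs : List α}, Follows 𝓑 pk₁ C xs → Follows 𝓑 pk₂ C xs → IsFresh 𝓑 xs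
  | [], _, _ => trivial
  | x :: xs, ⟨h₁, hx₁⟩, ⟨h₂, hx₂⟩ => by
      refine ⟨isFresh hpk₁ hsep h₁ h₂, fun hx => ?_⟩
      obtain ⟨B, hB, hxB⟩ := mem_biUnion.1 hx
      have hpath : IsPath 𝓑 (x :: xs) := isPath hpk₁ ⟨h₁, hx₁⟩
      obtain ⟨w, hw, hwB⟩ := hpath.1.exists_mem_of_mem_branchSets B hB
      have hxC : x ∈ C := by
        obtain ⟨h, rfl⟩ := hx₁
        exact (mem_inter.1 (hpk₁ _ h)).1
      have hwC : w ∈ C := subset hpk₁ h₁ (List.mem_toFinset.2 hw)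
      have hxw : x = w := card_le_one.1 (card_inter_le_one hsep h₁ h₂ B hB) x
        (mem_inter.2 ⟨hxC, hxB⟩) w (mem_inter.2 ⟨hwC, hwB⟩)
      exact (List.nodup_cons.1 hpath.nodup).1 (hxw ▸ hw)

end Follows

section Weights

variable [Fintype α] {m n : ℕ} {pk : (S : Finset α) → S.Nonempty → α}

lemma pathWeight_nil : pathWeight 𝓑 m n pk [] = covWeight m n 𝓑 := by
  rw [pathWeight, filter_true_of_mem (p := (Follows 𝓑 pk · [])) fun _ _ => trivial]
  simp [covWeight, zpow_neg, inv_pow]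

lemma pathWeight_eq_sum_cons (hpk : ∀ S h, pk S h ∈ S) {xs : List α}
    (hne : (uncovered 𝓑 xs.toFinset).Nonempty) :
    pathWeight 𝓑 m n pk xs = ∑ y ∈ nextSet 𝓑 xs.toFinset, pathWeight 𝓑 m n pk (y :: xs) := by
  set A := nextSet 𝓑 xs.toFinset
  have hA : A ∈ 𝓑 := (mem_uncovered.1 (nextSet_mem_uncovered hne)).1
  have hsplit : {C ∈ minCovers m 𝓑 | Follows 𝓑 pk C xs}
      = A.biUnion fun y => {C ∈ minCovers m 𝓑 | Follows 𝓑 pk C (y :: xs)} := by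
    ext C
    simp only [mem_filter, mem_biUnion]
    constructor
    · rintro ⟨hC, hxs⟩
      have h : (C ∩ A).Nonempty := (mem_minCovers.1 hC).2.1 A hA
      exact ⟨_, (mem_inter.1 (hpk _ h)).2, hC, hxs, h, rfl⟩
    · rintro ⟨y, -, hC, hxs, -⟩
      exact ⟨hC, hxs⟩
  rw [pathWeight, hsplit, sum_biUnion]
  · rfl
  · intro y₁ _ y₂ _ hne
    refine disjoint_left.2 fun C h₁ h₂ => hne ?_
    obtain ⟨-, -, _, rfl⟩ := mem_filter.1 h₁
    obtain ⟨-, -, _, rfl⟩ := mem_filter.1 h₂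
    rfl

lemma pathWeight_le_of_isCover (hpk : ∀ S h, pk S h ∈ S) {xs : List α} (hxs : xs.Nodup)
    (hcov : IsCover xs.toFinset 𝓑) :
    pathWeight 𝓑 m n pk xs ≤ if Follows 𝓑 pk xs.toFinset xs then (n : ℝ)⁻¹ ^ xs.length else 0 := by
  have hsub : {C ∈ minCovers m 𝓑 | Follows 𝓑 pk C xs}
      ⊆ ({xs.toFinset} : Finset (Finset α)).filter (Follows 𝓑 pk · xs) := fun C hC => by
    obtain ⟨hC, hf⟩ := mem_filter.1 hC
    refine mem_filter.2 ⟨mem_singleton.2 ?_, hf⟩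
    exact ((mem_minCovers.1 hC).2.2 _ (hf.subset hpk) hcov).symm
  calc pathWeight 𝓑 m n pk xs
        ≤ ∑ C ∈ ({xs.toFinset} : Finset (Finset α)).filter (Follows 𝓑 pk · xs), (n : ℝ)⁻¹ ^ #C :=
        sum_le_sum_of_subset_of_nonneg hsub fun _ _ _ => by positivity
    _ = _ := by rw [sum_filter, sum_singleton, List.toFinset_card_of_nodup hxs]

end Weights

/-- The extra weight a fresh node at depth `d` may carry; leaves have depth at least `D`. -/
noncomputable def freshBound (c : ℝ) (D d : ℕ) : ℝ := exp (-(∑ j ∈ Ico d D, (j : ℝ)) / c)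

lemma freshBound_of_le {c : ℝ} {D d : ℕ} (h : D ≤ d) : freshBound c D d = 1 := by
  simp [freshBound, Ico_eq_empty_of_le h]

lemma exp_mul_freshBound_succ_le {c : ℝ} (hc : 0 ≤ c) (D d : ℕ) :
    exp (-(d / c)) * freshBound c D (d + 1) ≤ freshBound c D d := by
  rcases lt_or_ge d D with hd | hd
  · rw [freshBound, freshBound, sum_eq_sum_Ico_succ_bot hd, ← exp_add]
    exact le_of_eq (congrArg exp (by ring))
  · rw [freshBound_of_le hd, freshBound_of_le (hd.trans d.le_succ), mul_one, exp_le_one_iff,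
      neg_nonpos]
    positivity

lemma div_mul_freshBound_succ_le {n l d p f : ℕ} (D : ℕ) (hn : 0 < n) (hl : 2 < l)
    (hpf : p + f = n) (hd : d ≤ f * (l - 2)) :
    (p / n : ℝ) * freshBound (((l : ℝ) - 2) * n) D (d + 1)
      ≤ freshBound (((l : ℝ) - 2) * n) D d := by
  have hl' : (2 : ℝ) < l := by exact_mod_cast hl
  have hn' : (0 : ℝ) < n := by exact_mod_cast hn
  have hc : 0 < ((l : ℝ) - 2) * n := mul_pos (by linarith) hn'
  have hd' : (d : ℝ) ≤ f * ((l : ℝ) - 2) := by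
    have := (Nat.cast_le (α := ℝ)).2 hd
    rwa [Nat.cast_mul, Nat.cast_sub hl.le, Nat.cast_two] at this
  refine le_trans (mul_le_mul_of_nonneg_right ?_ (exp_pos _).le)
    (exp_mul_freshBound_succ_le hc.le D d)
  calc (p / n : ℝ) = 1 - f / n := by
        rw [eq_sub_iff_add_eq, ← add_div, div_eq_one_iff_eq hn'.ne']; exact_mod_cast hpf
    _ ≤ 1 - d / (((l : ℝ) - 2) * n) := by
        rw [sub_le_sub_iff_left, div_le_div_iff₀ hc hn']
        nlinarith
    _ ≤ exp (-(d / (((l : ℝ) - 2) * n))) := by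
        linarith [add_one_le_exp (-(d / (((l : ℝ) - 2) * n)))]

section Pair

variable [Fintype α] {m n l D : ℕ} {pk₁ pk₂ : (S : Finset α) → S.Nonempty → α}

variable (𝓑) in
noncomputable def nodeBound (n l D : ℕ) (xs : List α) : ℝ :=
  (n : ℝ)⁻¹ ^ xs.length *
    (1 + if IsFresh 𝓑 xs then freshBound (((l : ℝ) - 2) * n) D xs.length else 0)

lemma pathWeight_add_le_nodeBound_of_isCover (hpk₁ : ∀ S h, pk₁ S h ∈ S)
    (hpk₂ : ∀ S h, pk₂ S h ∈ S) (hsep : ∀ S h, pk₁ S h = pk₂ S h → #S ≤ 1)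
    (hD : ∀ X, IsCover X 𝓑 → D ≤ #X) {xs : List α} (hxs : IsPath 𝓑 xs)
    (hcov : IsCover xs.toFinset 𝓑) :
    pathWeight 𝓑 m n pk₁ xs + pathWeight 𝓑 m n pk₂ xs ≤ nodeBound 𝓑 n l D xs := by
  have hD' : D ≤ xs.length := List.toFinset_card_of_nodup hxs.nodup ▸ hD _ hcov
  have h₁ := pathWeight_le_of_isCover (m := m) (n := n) hpk₁ hxs.nodup hcov
  have h₂ := pathWeight_le_of_isCover (m := m) (n := n) hpk₂ hxs.nodup hcov
  have hw : 0 ≤ (n : ℝ)⁻¹ ^ xs.length := by positivity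
  have hg : 0 ≤ if IsFresh 𝓑 xs then freshBound (((l : ℝ) - 2) * n) D xs.length else 0 := by
    split_ifs
    exacts [(exp_pos _).le, le_rfl]
  rw [nodeBound]
  by_cases hf₁ : Follows 𝓑 pk₁ xs.toFinset xs <;> by_cases hf₂ : Follows 𝓑 pk₂ xs.toFinset xs <;>
    simp only [hf₁, hf₂, if_true, if_false] at h₁ h₂
  · rw [if_pos (Follows.isFresh hpk₁ hsep hf₁ hf₂), freshBound_of_le hD']
    linarith
  all_goals nlinarith

lemma pathWeight_add_le_nodeBound_of_cons (hpk₁ : ∀ S h, pk₁ S h ∈ S)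
    (hpk₂ : ∀ S h, pk₂ S h ∈ S) (hunif : ∀ B ∈ 𝓑, #B = n)
    (hint : ∀ B1 ∈ 𝓑, ∀ B2 ∈ 𝓑, (B1 ∩ B2).Nonempty) (hdeg : ∀ x, #{B ∈ 𝓑 | x ∈ B} < l)
    (hl : 2 < l) {xs : List α} (hxs : IsPath 𝓑 xs) (hne : (uncovered 𝓑 xs.toFinset).Nonempty)
    (ih : ∀ y ∈ nextSet 𝓑 xs.toFinset, pathWeight 𝓑 m n pk₁ (y :: xs)
      + pathWeight 𝓑 m n pk₂ (y :: xs) ≤ nodeBound 𝓑 n l D (y :: xs)) :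
    pathWeight 𝓑 m n pk₁ xs + pathWeight 𝓑 m n pk₂ xs ≤ nodeBound 𝓑 n l D xs := by
  set A := nextSet 𝓑 xs.toFinset
  set U := (branchSets 𝓑 xs).biUnion id
  set g := freshBound (((l : ℝ) - 2) * n) D
  have hA : A ∈ 𝓑 := (mem_uncovered.1 (nextSet_mem_uncovered hne)).1
  have hn : 0 < n := hunif A hA ▸ card_pos.2 ((hint A hA A hA).mono inter_subset_left)
  have hn' : (n : ℝ) ≠ 0 := by positivity
  rw [pathWeight_eq_sum_cons hpk₁ hne, pathWeight_eq_sum_cons hpk₂ hne, ← sum_add_distrib]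
  refine (sum_le_sum ih).trans ?_
  simp only [nodeBound, IsFresh, List.length_cons, ← mul_sum, sum_add_distrib, sum_const,
    hunif A hA]
  by_cases hfresh : IsFresh 𝓑 xs
  · simp only [hfresh, true_and, if_true]
    rw [← sum_filter, sum_const, ← sdiff_eq_filter]
    have key := div_mul_freshBound_succ_le D hn hl
      ((card_sdiff_add_card_inter A U).trans (hunif A hA))
      (hxs.length_le_card_inter_mul hint hdeg hne)
    calc (n : ℝ)⁻¹ ^ (xs.length + 1) * (n • (1 : ℝ) + #(A \ U) • g (xs.length + 1))
        = (n : ℝ)⁻¹ ^ xs.length * (1 + (#(A \ U) / n : ℝ) * g (xs.length + 1)) := by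
          simp only [nsmul_eq_mul, mul_one, pow_succ, div_eq_mul_inv]
          linear_combination (n : ℝ)⁻¹ ^ xs.length * inv_mul_cancel₀ hn'
      _ ≤ (n : ℝ)⁻¹ ^ xs.length * (1 + g xs.length) := by gcongr
  · simp only [hfresh, false_and, if_false, sum_const, nsmul_eq_mul, mul_zero, add_zero, mul_one]
    rw [pow_succ, mul_assoc, inv_mul_cancel₀ hn', mul_one]

theorem pathWeight_add_le_nodeBound (hpk₁ : ∀ S h, pk₁ S h ∈ S)
    (hpk₂ : ∀ S h, pk₂ S h ∈ S) (hsep : ∀ S h, pk₁ S h = pk₂ S h → #S ≤ 1)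
    (hunif : ∀ B ∈ 𝓑, #B = n) (hint : ∀ B1 ∈ 𝓑, ∀ B2 ∈ 𝓑, (B1 ∩ B2).Nonempty)
    (hdeg : ∀ x, #{B ∈ 𝓑 | x ∈ B} < l) (hl : 2 < l) (hD : ∀ X, IsCover X 𝓑 → D ≤ #X)
    {xs : List α} (hxs : IsPath 𝓑 xs) :
    pathWeight 𝓑 m n pk₁ xs + pathWeight 𝓑 m n pk₂ xs ≤ nodeBound 𝓑 n l D xs := by
  induction hu : #(uncovered 𝓑 xs.toFinset) using Nat.strong_induction_on generalizing xs with
  | _ u ih =>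
  rcases (uncovered 𝓑 xs.toFinset).eq_empty_or_nonempty with hcov | hne
  · exact pathWeight_add_le_nodeBound_of_isCover hpk₁ hpk₂ hsep hD hxs
      (uncovered_eq_empty_iff.1 hcov)
  · exact pathWeight_add_le_nodeBound_of_cons hpk₁ hpk₂ hunif hint hdeg hl hxs hne
      fun y hy => ih _ (hu ▸ card_uncovered_cons_lt hy) ⟨hxs, hy⟩ rfl

end Pair

end CoverTree

open CoverTree in
theorem two_mul_covWeight_self_le [Fintype α] [DecidableEq α] (m : ℕ) {n l D : ℕ}
    {𝓑 : Finset (Finset α)} (hunif : ∀ B ∈ 𝓑, #B = n)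
    (hint : ∀ B1 ∈ 𝓑, ∀ B2 ∈ 𝓑, (B1 ∩ B2).Nonempty) (hdeg : ∀ x, #{B ∈ 𝓑 | x ∈ B} < l)
    (hl : 2 < l) (hD : ∀ X, IsCover X 𝓑 → D ≤ #X) :
    2 * covWeight m n 𝓑 ≤ 1 + exp (-(∑ j ∈ range D, (j : ℝ)) / (((l : ℝ) - 2) * n)) := by
  obtain ⟨pk₁, pk₂, hpk₁, hpk₂, hsep⟩ := exists_pick_pair α
  have := pathWeight_add_le_nodeBound (m := m) hpk₁ hpk₂ hsep hunif hint hdeg hl hD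
    (xs := []) trivial
  rw [pathWeight_nil, pathWeight_nil, nodeBound,
    if_pos (show IsFresh 𝓑 ([] : List α) from trivial)] at this
  rwa [List.length_nil, pow_zero, one_mul, freshBound, ← range_eq_Ico, ← two_mul] at this

lemma exp_neg_le_one_sub {E Q : ℝ} (hQ₀ : 0 ≤ Q) (hQ₁ : Q ≤ 1) (hE : Q / 4 ≤ E) :
    exp (-E) ≤ 1 - Q / 10 := by
  have h : exp (-E) * (1 + E) ≤ 1 := by
    calc exp (-E) * (1 + E) ≤ exp (-E) * exp E := by
          gcongr
          linarith [add_one_le_exp E]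
      _ = 1 := by rw [← exp_add, neg_add_cancel, exp_zero]
  nlinarith [exp_pos (-E)]

lemma sq_div_le_sum_range_div {l n r D : ℕ} (hl : 2 < l) (hn : 0 < n) (hD : 5 ≤ D)
    (hr : r < (D + 1) * (l - 1)) :
    (r : ℝ) ^ 2 / (l ^ 3 * n) / 4 ≤ (∑ j ∈ range D, (j : ℝ)) / ((l - 2) * n) := by
  have hsum : (∑ j ∈ range D, (j : ℝ)) * 2 = D * (D - 1) := by
    have := congrArg (Nat.cast (R := ℝ)) (sum_range_id_mul_two D)
    push_cast [Nat.cast_sub (by omega : 1 ≤ D)] at this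
    exact this
  have hl' : (2 : ℝ) < l := by exact_mod_cast hl
  have hn' : (0 : ℝ) < n := by exact_mod_cast hn
  have hD' : (5 : ℝ) ≤ D := by exact_mod_cast hD
  have hr' : (r : ℝ) ≤ (D + 1) * l := by
    have : r ≤ (D + 1) * l := hr.le.trans (Nat.mul_le_mul_left _ (Nat.sub_le l 1))
    exact_mod_cast this
  rw [div_div, div_le_div_iff₀ (by positivity) (by nlinarith)]
  have key : (r : ℝ) ^ 2 * (l - 2) ≤ (∑ j ∈ range D, (j : ℝ)) * 2 * 2 * l ^ 3 := by
    rw [hsum]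
    calc (r : ℝ) ^ 2 * (l - 2) ≤ ((D + 1) * l) ^ 2 * l := by
          gcongr
          linarith
      _ = ((D : ℝ) + 1) ^ 2 * l ^ 3 := by ring
      _ ≤ D * (D - 1) * 2 * l ^ 3 := by gcongr; nlinarith
  calc (r : ℝ) ^ 2 * ((l - 2) * n) = (r ^ 2 * (l - 2)) * n := by ring
    _ ≤ ((∑ j ∈ range D, (j : ℝ)) * 2 * 2 * l ^ 3) * n := by gcongr
    _ = _ := by ring

lemma twenty_mul_le {n l r k : ℕ} (hl : 0 < l) (hrn : r ^ 2 ≤ l ^ 3 * n)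
    (hk : (k : ℝ) ≤ r / (20 * (l : ℝ) ^ 3)) : 20 * (k : ℝ) ≤ n := by
  have hl₃ : (0 : ℝ) < l ^ 3 := by positivity
  have h₁ : (k : ℝ) * (20 * l ^ 3) ≤ r := (le_div_iff₀ (by positivity)).1 hk
  have h₂ : (r : ℝ) ≤ l ^ 3 * n := by exact_mod_cast (Nat.le_self_pow two_ne_zero r).trans hrn
  nlinarith

lemma one_add_exp_le_two_mul_pow {n l r k : ℕ} (hn : 0 < n) (hl : 2 < l)
    (hrn : r ^ 2 ≤ l ^ 3 * n) (hk : (k : ℝ) ≤ r / (20 * (l : ℝ) ^ 3)) (hkn : (k : ℝ) ≤ n) :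
    1 + exp (-(∑ j ∈ range (r / (l - 1)), (j : ℝ)) / ((l - 2) * n))
      ≤ 2 * (((n : ℝ) - k) / n) ^ r := by
  have hn' : (0 : ℝ) < n := by exact_mod_cast hn
  have hl' : (2 : ℝ) < l := by exact_mod_cast hl
  set E := (∑ j ∈ range (r / (l - 1)), (j : ℝ)) / ((l - 2) * n)
  rcases Nat.eq_zero_or_pos k with rfl | hk₀
  · have hE : 0 ≤ E := div_nonneg (sum_nonneg fun j _ => j.cast_nonneg)
      (mul_nonneg (by linarith) hn'.le)
    rw [Nat.cast_zero, sub_zero, div_self hn'.ne', one_pow, neg_div]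
    linarith [exp_le_one_iff.2 (neg_nonpos.2 hE)]
  set Q := (r : ℝ) ^ 2 / (l ^ 3 * n)
  have hr : 20 * l ^ 3 ≤ r := by
    have hk₁ : (1 : ℝ) ≤ k := by exact_mod_cast hk₀
    have : 20 * (l : ℝ) ^ 3 ≤ r := by
      nlinarith [(le_div_iff₀ (by positivity : (0 : ℝ) < 20 * l ^ 3)).1 hk]
    exact_mod_cast this
  have hD : 5 ≤ r / (l - 1) := by
    refine (Nat.le_div_iff_mul_le (by omega)).2 ?_
    have := Nat.le_self_pow (n := 3) (by norm_num) l
    omega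
  have hEQ : Q / 4 ≤ E :=
    sq_div_le_sum_range_div hl hn hD (by rw [add_one_mul]; exact Nat.lt_div_mul_add (by omega))
  have hQ₁ : Q ≤ 1 := by
    rw [div_le_one (by positivity)]
    exact_mod_cast hrn
  have hexp := exp_neg_le_one_sub (by positivity) hQ₁ hEQ
  have hbern : 1 - r * (k / n : ℝ) ≤ (((n : ℝ) - k) / n) ^ r := by
    have := one_add_mul_le_pow (a := -(k / n : ℝ))
      (by linarith [div_le_one_of_le₀ hkn hn'.le]) r
    rwa [← sub_eq_add_neg, one_sub_div hn'.ne', mul_neg, ← sub_eq_add_neg] at this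
  have hrk : r * (k / n : ℝ) ≤ Q / 20 := by
    calc r * (k / n : ℝ) ≤ r * (r / (20 * l ^ 3) / n) := by gcongr
      _ = Q / 20 := by
        simp only [Q]
        field_simp
  rw [neg_div]
  linarith

theorem stmt14 [Fintype α] [DecidableEq α] (n l r : ℕ) (hn : 1 ≤ n) (hl : 1 ≤ l)
    (hr : 2 * l ≤ r) (hrn : r ^ 2 ≤ l ^ 3 * n)
    (𝓑 : Finset (Finset α)) (hcard : 𝓑.card = r) (hunif : ∀ B ∈ 𝓑, B.card = n)
    (hint : ∀ B1 ∈ 𝓑, ∀ B2 ∈ 𝓑, (B1 ∩ B2).Nonempty)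
    (hdeg : ∀ 𝓢 ⊆ 𝓑, 𝓢.card = l → ∀ x : α, ¬ ∀ B ∈ 𝓢, x ∈ B)
    (k : ℕ) (hk : (k : ℝ) ≤ (r : ℝ) / (20 * (l : ℝ) ^ 3)) :
    covWeight n ((n : ℝ) - k) 𝓑 ≤ 1 := by
  have hdeg' := card_filter_mem_lt hdeg
  have hl₂ : 2 < l := two_lt_of_intersecting hint hdeg' (by omega)
  have htree := two_mul_covWeight_self_le n hunif hint hdeg' hl₂
    fun X hX => hcard ▸ card_div_le_card_of_isCover hdeg' hX
  have hkn : 20 * (k : ℝ) ≤ n := twenty_mul_le (by omega) hrn hk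
  have hnum := one_add_exp_le_two_mul_pow hn hl₂ hrn hk (by linarith)
  have hnk : 0 < (n : ℝ) - k := by
    have : (1 : ℝ) ≤ n := by exact_mod_cast hn
    linarith
  calc covWeight n ((n : ℝ) - k) 𝓑 ≤ ((n : ℝ) / (n - k)) ^ r * covWeight n n 𝓑 :=
        hcard ▸ covWeight_le_pow_mul hnk (by linarith) 𝓑
    _ ≤ ((n : ℝ) / (n - k)) ^ r * (((n : ℝ) - k) / n) ^ r := by gcongr; linarith
    _ = 1 := by
        have hn' : (n : ℝ) ≠ 0 := by positivity
        rw [← mul_pow, div_mul_div_comm, mul_comm, div_self (mul_ne_zero hnk.ne' hn'), one_pow]
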